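/- If the temporal k-core T^k_[ts,te] is nonempty and has tightest time interval [ts',te'], then for every interval [a,b] with [ts',te'] ⊆ [a,b] ⊆ [ts,te], the temporal k-core T^k_[a,b] is identical to T^k_[ts,te]. -/
import Mathlib


abbrev TEdge : Type := ℕ × ℕ × ℤ

/-- Projection of a temporal edge set over time interval [a,b]. -/
def projE (E : Finset TEdge) (a b : ℤ) : Finset TEdge :=
  E.filter (fun e => a ≤ e.2.2 ∧ e.2.2 ≤ b)

def verts (E : Finset TEdge) : Finset ℕ :=
  E.image (fun e => e.1) ∪ E.image (fun e => e.2.1)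

/-- Distinct neighbors of `v` inside vertex set `S` via edges of `E`. -/
def nbrs (E : Finset TEdge) (S : Finset ℕ) (v : ℕ) : Finset ℕ :=
  S.filter (fun u => u ≠ v ∧
    (E.filter (fun e => (e.1 = u ∧ e.2.1 = v) ∨ (e.1 = v ∧ e.2.1 = u))).Nonempty)

/-- `S` is a `k`-core candidate: every vertex of `S` has ≥ k distinct neighbors in `S`. -/
def isCoreSet (E : Finset TEdge) (k : ℕ) (S : Finset ℕ) : Prop :=
  ∀ v ∈ S, k ≤ (nbrs E S v).card

instance (E : Finset TEdge) (k : ℕ) : DecidablePred (isCoreSet E k) := fun S => by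
  unfold isCoreSet; infer_instance

/-- The `k`-core vertex set of a temporal edge set: union of all candidates. -/
def core (E : Finset TEdge) (k : ℕ) : Finset ℕ :=
  ((verts E).powerset.filter (isCoreSet E k)).sup id

/-- The edges of `E` induced among the `k`-core vertices. -/
def coreEdges (E : Finset TEdge) (k : ℕ) : Finset TEdge :=
  E.filter (fun e => e.1 ∈ core E k ∧ e.2.1 ∈ core E k)

/-- Vertices of the temporal k-core of interval [a,b]. -/
def coreV (E : Finset TEdge) (k : ℕ) (a b : ℤ) : Finset ℕ :=
  core (projE E a b) k

/-- Temporal edges of the temporal k-core of interval [a,b]. -/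
def coreE (E : Finset TEdge) (k : ℕ) (a b : ℤ) : Finset TEdge :=
  coreEdges (projE E a b) k

/-- Two intervals induce identical temporal k-cores (same vertices and temporal edges). -/
def identCore (E : Finset TEdge) (k : ℕ) (a b a' b' : ℤ) : Prop :=
  coreV E k a b = coreV E k a' b' ∧ coreE E k a b = coreE E k a' b'

lemma core_sub_verts (E : Finset TEdge) (k : ℕ) : core E k ⊆ verts E := by
  intro v hv
  rw [core, Finset.mem_sup] at hv
  obtain ⟨S, hS, hvS⟩ := hv
  rw [Finset.mem_filter, Finset.mem_powerset] at hS
  exact hS.1 hvS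

lemma sub_core (E : Finset TEdge) (k : ℕ) (S : Finset ℕ)
    (hv : S ⊆ verts E) (hc : isCoreSet E k S) : S ⊆ core E k := by
  have : S ∈ (verts E).powerset.filter (isCoreSet E k) := by
    rw [Finset.mem_filter, Finset.mem_powerset]; exact ⟨hv, hc⟩
  exact Finset.le_sup (f := id) this

lemma nbrs_mono_E (E₁ E₂ : Finset TEdge) (S : Finset ℕ) (v : ℕ)
    (h : E₁ ⊆ E₂) : nbrs E₁ S v ⊆ nbrs E₂ S v := by
  intro u hu
  rw [nbrs, Finset.mem_filter] at hu ⊢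
  obtain ⟨huS, h1, e, he⟩ := hu
  rw [Finset.mem_filter] at he
  exact ⟨huS, h1, e, Finset.mem_filter.2 ⟨h he.1, he.2⟩⟩

lemma nbrs_mono_S (E : Finset TEdge) (S₁ S₂ : Finset ℕ) (v : ℕ)
    (h : S₁ ⊆ S₂) : nbrs E S₁ v ⊆ nbrs E S₂ v := by
  intro u hu
  rw [nbrs, Finset.mem_filter] at hu ⊢
  exact ⟨h hu.1, hu.2⟩

lemma core_isCoreSet (E : Finset TEdge) (k : ℕ) : isCoreSet E k (core E k) := by
  intro v hv
  rw [core, Finset.mem_sup] at hv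
  obtain ⟨S, hS, hvS⟩ := hv
  rw [Finset.mem_filter, Finset.mem_powerset] at hS
  have hSc : S ⊆ core E k := sub_core E k S hS.1 hS.2
  exact le_trans (hS.2 v hvS) (Finset.card_le_card (nbrs_mono_S E S _ v hSc))

lemma core_mono (E₁ E₂ : Finset TEdge) (k : ℕ) (h : E₁ ⊆ E₂) :
    core E₁ k ⊆ core E₂ k := by
  intro v hv
  rw [core, Finset.mem_sup] at hv
  obtain ⟨S, hS, hvS⟩ := hv
  rw [Finset.mem_filter, Finset.mem_powerset] at hS
  refine sub_core E₂ k S ?_ ?_ hvS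
  · intro v hv
    have := hS.1 hv
    rw [verts, Finset.mem_union] at this ⊢
    rcases this with hv' | hv' <;> rw [Finset.mem_image] at hv' <;>
      obtain ⟨e, he, rfl⟩ := hv'
    · exact Or.inl (Finset.mem_image.2 ⟨e, h he, rfl⟩)
    · exact Or.inr (Finset.mem_image.2 ⟨e, h he, rfl⟩)
  · intro v hv
    exact le_trans (hS.2 v hv) (Finset.card_le_card (nbrs_mono_E E₁ E₂ S v h))

/-- if [ts',te'] is the TTI of the nonempty core T^k_[ts,te]
(i.e. the span of its edge timestamps), then every [a,b] with
[ts',te'] ⊆ [a,b] ⊆ [ts,te] induces an identical temporal k-core. -/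
theorem stmt_7 (E : Finset TEdge) (k : ℕ) (ts te ts' te' : ℤ)
    (h : (coreE E k ts te).Nonempty)
    (hmin : IsLeast {t : ℤ | ∃ e ∈ coreE E k ts te, e.2.2 = t} ts')
    (hmax : IsGreatest {t : ℤ | ∃ e ∈ coreE E k ts te, e.2.2 = t} te') :
    ∀ a b : ℤ, ts ≤ a → a ≤ ts' → te' ≤ b → b ≤ te →
      identCore E k a b ts te := by
  intro a b hts hats' hte'b hbte
  -- the projection over [a,b] is contained in the one over [ts,te]
  have hproj : projE E a b ⊆ projE E ts te := by
    intro e he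
    rw [projE, Finset.mem_filter] at he ⊢
    exact ⟨he.1, le_trans hts he.2.1, le_trans he.2.2 hbte⟩
  set S : Finset ℕ := core (projE E ts te) k with hSdef
  -- key: any edge of projE E ts te whose endpoints lie in S belongs to projE E a b
  have keyA : ∀ e ∈ projE E ts te, e.1 ∈ S → e.2.1 ∈ S → e ∈ projE E a b := by
    intro e he h1 h2
    have hcore : e ∈ coreE E k ts te := by
      rw [coreE, coreEdges, Finset.mem_filter]
      exact ⟨he, h1, h2⟩
    have hmem : e.2.2 ∈ {t : ℤ | ∃ e' ∈ coreE E k ts te, e'.2.2 = t} := ⟨e, hcore, rfl⟩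
    have hlo : ts' ≤ e.2.2 := hmin.2 hmem
    have hhi : e.2.2 ≤ te' := hmax.2 hmem
    rw [projE, Finset.mem_filter] at he ⊢
    exact ⟨he.1, le_trans hats' hlo, le_trans hhi hte'b⟩
  -- every vertex of S is incident to an edge of coreE, hence lies in verts (projE E a b)
  have hSverts : S ⊆ verts (projE E a b) := by
    intro v hv
    rcases Nat.eq_zero_or_pos k with hk | hk
    · -- k = 0 : core = verts, and every edge's endpoints are in verts
      have hvc : verts (projE E ts te) ⊆ S := by
        rw [hSdef]
        apply sub_core
        · exact Finset.Subset.refl _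
        · intro w hw; rw [hk]; exact Nat.zero_le _
      have hv' : v ∈ verts (projE E ts te) := core_sub_verts _ _ hv
      rw [verts, Finset.mem_union] at hv'
      rcases hv' with hv' | hv' <;> rw [Finset.mem_image] at hv' <;>
        obtain ⟨e, he, rfl⟩ := hv'
      · have h1 : e.1 ∈ verts (projE E ts te) := by
          rw [verts, Finset.mem_union]
          exact Or.inl (Finset.mem_image.2 ⟨e, he, rfl⟩)
        have h2 : e.2.1 ∈ verts (projE E ts te) := by
          rw [verts, Finset.mem_union]
          exact Or.inr (Finset.mem_image.2 ⟨e, he, rfl⟩)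
        have := keyA e he (hvc h1) (hvc h2)
        rw [verts, Finset.mem_union]
        exact Or.inl (Finset.mem_image.2 ⟨e, this, rfl⟩)
      · have h1 : e.1 ∈ verts (projE E ts te) := by
          rw [verts, Finset.mem_union]
          exact Or.inl (Finset.mem_image.2 ⟨e, he, rfl⟩)
        have h2 : e.2.1 ∈ verts (projE E ts te) := by
          rw [verts, Finset.mem_union]
          exact Or.inr (Finset.mem_image.2 ⟨e, he, rfl⟩)
        have := keyA e he (hvc h1) (hvc h2)
        rw [verts, Finset.mem_union]
        exact Or.inr (Finset.mem_image.2 ⟨e, this, rfl⟩)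
    · -- k ≥ 1 : v has a neighbor in S, witness edge has both endpoints in S
      have hcard := core_isCoreSet (projE E ts te) k v hv
      rw [← hSdef] at hcard
      have hne : (nbrs (projE E ts te) S v).Nonempty := by
        rw [← Finset.card_pos]; omega
      obtain ⟨u, hu⟩ := hne
      rw [nbrs, Finset.mem_filter] at hu
      obtain ⟨huS, hune, e, he⟩ := hu
      rw [Finset.mem_filter] at he
      obtain ⟨heP, hor⟩ := he
      rcases hor with ⟨h1, h2⟩ | ⟨h1, h2⟩
      · have : e ∈ projE E a b := keyA e heP (h1 ▸ huS) (h2 ▸ hv)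
        rw [verts, Finset.mem_union]
        exact Or.inr (Finset.mem_image.2 ⟨e, this, h2⟩)
      · have : e ∈ projE E a b := keyA e heP (h1 ▸ hv) (h2 ▸ huS)
        rw [verts, Finset.mem_union]
        exact Or.inl (Finset.mem_image.2 ⟨e, this, h1⟩)
  -- S is a core set with respect to projE E a b
  have hScore : isCoreSet (projE E a b) k S := by
    intro v hv
    have hcard := core_isCoreSet (projE E ts te) k v hv
    rw [← hSdef] at hcard
    refine le_trans hcard (Finset.card_le_card ?_)
    intro u hu
    rw [nbrs, Finset.mem_filter] at hu ⊢
    obtain ⟨huS, hune, e, he⟩ := hu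
    rw [Finset.mem_filter] at he
    obtain ⟨heP, hor⟩ := he
    have heab : e ∈ projE E a b := by
      rcases hor with ⟨h1, h2⟩ | ⟨h1, h2⟩
      · exact keyA e heP (h1 ▸ huS) (h2 ▸ hv)
      · exact keyA e heP (h1 ▸ hv) (h2 ▸ huS)
    exact ⟨huS, hune, e, Finset.mem_filter.2 ⟨heab, hor⟩⟩
  -- vertex sets coincide
  have hVeq : coreV E k a b = coreV E k ts te := by
    apply Finset.Subset.antisymm
    · exact core_mono _ _ k hproj
    · exact sub_core _ k S hSverts hScore
  refine ⟨hVeq, ?_⟩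
  -- edge sets coincide
  rw [coreE, coreE, coreEdges, coreEdges]
  ext e
  rw [Finset.mem_filter, Finset.mem_filter]
  constructor
  · rintro ⟨he, h1, h2⟩
    have h1' : e.1 ∈ S := by rw [hSdef, ← coreV]; rw [← hVeq]; exact h1
    have h2' : e.2.1 ∈ S := by rw [hSdef, ← coreV]; rw [← hVeq]; exact h2
    exact ⟨hproj he, h1', h2'⟩
  · rintro ⟨he, h1, h2⟩
    have heab := keyA e he h1 h2
    have h1' : e.1 ∈ core (projE E a b) k := by
      have : e.1 ∈ coreV E k ts te := h1
      rw [← hVeq] at this; exact this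
    have h2' : e.2.1 ∈ core (projE E a b) k := by
      have : e.2.1 ∈ coreV E k ts te := h2
      rw [← hVeq] at this; exact this
    exact ⟨heab, h1', h2'⟩
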